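/- arXiv:1705.11156 — 2 statements merged into one kernel-verified Lean document; each statement's English description precedes it below -/
import Mathlib

section
/- Let f : ℝⁿ → ℝ be a weighted homogeneous polynomial of type (d; w₁, …, wₙ) whose gradient vanishes only at the origin in some neighborhood of 0 (isolated singularity). Then there exist a constant C > 0 and a neighborhood U of the origin such that for all x ∈ U, (Σ_{i=1}^n ρ(x)^{2wᵢ} |∂f/∂xᵢ(x)|²)^{1/2} ≥ C · ρ(x)^d, where ρ(x) = (Σ_{i=1}^n |xᵢ|^{2/wᵢ})^{1/2}. -/
open MvPolynomial

/-- Euclidean norm of the gradient of a polynomial `f` at `x`. -/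
noncomputable def gradNorm {n : ℕ} (f : MvPolynomial (Fin n) ℝ) (x : Fin n → ℝ) : ℝ :=
  Real.sqrt (∑ i, (eval x (pderiv i f)) ^ 2)

/-- Euclidean norm on `Fin n → ℝ`. -/
noncomputable def eNorm {n : ℕ} (x : Fin n → ℝ) : ℝ :=
  Real.sqrt (∑ i, (x i) ^ 2)

/-- `f` is weighted homogeneous of type `(d; w)`: every monomial `x^α` appearing in `f`
satisfies `∑ i, α i * w i = d`. -/
def IsWeightedHomog {n : ℕ} (f : MvPolynomial (Fin n) ℝ) (w : Fin n → ℕ) (d : ℕ) : Prop :=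
  ∀ α ∈ f.support, ∑ i, α i * w i = d

/-- `f` is non-degenerate (isolated singularity at the origin): in some neighborhood of `0`
the gradient of `f` vanishes only at the origin. -/
def Nondeg {n : ℕ} (f : MvPolynomial (Fin n) ℝ) : Prop :=
  ∃ U ∈ nhds (0 : Fin n → ℝ), ∀ x ∈ U, (∀ i, eval x (pderiv i f) = 0) → x = 0

/-- The Łojasiewicz inequality `‖∇f(x)‖ ≥ C ‖x‖^lam` holds near `0` for some `C > 0`. -/
def LojIneq {n : ℕ} (f : MvPolynomial (Fin n) ℝ) (lam : ℝ) : Prop :=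
  ∃ C > (0 : ℝ), ∃ U ∈ nhds (0 : Fin n → ℝ), ∀ x ∈ U, C * eNorm x ^ lam ≤ gradNorm f x

/-- The Łojasiewicz exponent of `f`: the infimum of all `lam > 0` for which the
Łojasiewicz inequality holds near the origin. -/
noncomputable def lojExp {n : ℕ} (f : MvPolynomial (Fin n) ℝ) : ℝ :=
  sInf {lam : ℝ | 0 < lam ∧ LojIneq f lam}

/-- The weighted "radius" `ρ(x) = (∑ i |x i| ^ (2 / w i)) ^ (1/2)`. -/
noncomputable def rho {n : ℕ} (w : Fin n → ℕ) (x : Fin n → ℝ) : ℝ :=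
  Real.sqrt (∑ i, |x i| ^ ((2 : ℝ) / (w i : ℝ)))

/-- The weighted norm of the gradient:
`‖grad_w f(x)‖_w = (∑ i ρ(x)^(2 wᵢ) |∂f/∂xᵢ(x)|²)^(1/2)`. -/
noncomputable def wGradNorm {n : ℕ} (w : Fin n → ℕ) (f : MvPolynomial (Fin n) ℝ)
    (x : Fin n → ℝ) : ℝ :=
  Real.sqrt (∑ i, rho w x ^ (2 * w i) * (eval x (pderiv i f)) ^ 2)

/-!
The weighted dilation `x ↦ (t ^ wᵢ * xᵢ)ᵢ` multiplies `ρ` by `t` and `‖grad_w f‖_w` by `t ^ d`,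
so it suffices to bound `‖grad_w f‖_w` from below on the compact weighted sphere `ρ = 1`. There it
is continuous and positive: a critical point `y ≠ 0` would give critical points
`weightedScale w t y` accumulating at the origin as `t → 0⁺`.
-/

open Finset Filter Topology

def weightedScale {σ : Type*} (w : σ → ℕ) (t : ℝ) (x : σ → ℝ) : σ → ℝ :=
  fun j => t ^ w j * x j

section WeightedScale

variable {σ : Type*} (w : σ → ℕ)

@[simp]
lemma weightedScale_apply (t : ℝ) (x : σ → ℝ) (j : σ) :
    weightedScale w t x j = t ^ w j * x j := rfl

@[simp]
lemma weightedScale_one (x : σ → ℝ) : weightedScale w 1 x = x := by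
  ext j; simp

lemma weightedScale_weightedScale (s t : ℝ) (x : σ → ℝ) :
    weightedScale w s (weightedScale w t x) = weightedScale w (s * t) x := by
  ext j; simp [mul_pow, mul_assoc]

lemma weightedScale_eq_zero_iff {t : ℝ} (ht : t ≠ 0) {x : σ → ℝ} :
    weightedScale w t x = 0 ↔ x = 0 := by
  simp [funext_iff, ht]

lemma weightedScale_zero_left {w : σ → ℕ} (hw : ∀ i, 0 < w i) (x : σ → ℝ) :
    weightedScale w 0 x = 0 := by
  ext j; simp [(hw j).ne']

lemma tendsto_weightedScale_zero {w : σ → ℕ} (hw : ∀ i, 0 < w i) (x : σ → ℝ) :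
    Tendsto (fun t => weightedScale w t x) (𝓝 0) (𝓝 0) := by
  have hcont : Continuous fun t => weightedScale w t x := by
    unfold weightedScale; fun_prop
  simpa only [weightedScale_zero_left hw] using hcont.tendsto 0

lemma eval_weightedScale_monomial [Fintype σ] (β : σ →₀ ℕ) (c t : ℝ) (x : σ → ℝ) :
    eval (weightedScale w t x) (monomial β c) = t ^ (∑ j, β j * w j) * eval x (monomial β c) := by
  rw [eval_monomial, eval_monomial, Finsupp.prod_pow, Finsupp.prod_pow]
  simp only [weightedScale_apply, mul_pow, ← pow_mul, prod_mul_distrib, prod_pow_eq_pow_sum,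
    mul_comm (w _)]
  ring

end WeightedScale

section WeightedHomog

variable {n d : ℕ} {w : Fin n → ℕ} {f : MvPolynomial (Fin n) ℝ}

lemma sum_mul_weight_eq_add_of_ne_zero {α : Fin n →₀ ℕ} {i : Fin n} (hi : α i ≠ 0) :
    ∑ j, α j * w j = w i + ∑ j, (α - Finsupp.single i 1 : Fin n →₀ ℕ) j * w j := by
  conv_lhs => rw [← tsub_add_cancel_of_le (Finsupp.single_le_iff.2 (Nat.one_le_iff_ne_zero.2 hi))]
  simp [add_mul, sum_add_distrib, Finsupp.single_apply, add_comm]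

/-- `∂f/∂xᵢ` is weighted homogeneous of degree `d - wᵢ`; the factor `t ^ wᵢ` avoids the
truncated subtraction. -/
lemma pow_mul_eval_weightedScale_pderiv (hhom : IsWeightedHomog f w d) (i : Fin n) (t : ℝ)
    (x : Fin n → ℝ) :
    t ^ w i * eval (weightedScale w t x) (pderiv i f) = t ^ d * eval x (pderiv i f) := by
  conv_lhs => rw [f.as_sum]
  conv_rhs => rw [f.as_sum]
  simp only [map_sum, mul_sum]
  refine sum_congr rfl fun α hα => ?_
  rw [pderiv_monomial, eval_weightedScale_monomial]
  rcases eq_or_ne (α i) 0 with hi | hi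
  · simp [hi]
  · rw [← mul_assoc, ← pow_add, ← sum_mul_weight_eq_add_of_ne_zero hi, hhom α hα]

end WeightedHomog

section Rho

variable {n : ℕ} {w : Fin n → ℕ}

lemma continuous_rho (w : Fin n → ℕ) : Continuous (rho w) := by
  unfold rho
  refine Real.continuous_sqrt.comp (continuous_finsetSum _ fun i _ => ?_)
  exact (continuous_abs.comp (continuous_apply i)).rpow_const fun _ => Or.inr (by positivity)

lemma rho_nonneg (w : Fin n → ℕ) (x : Fin n → ℝ) : 0 ≤ rho w x := Real.sqrt_nonneg _

lemma rho_zero (hw : ∀ i, 0 < w i) : rho w (0 : Fin n → ℝ) = 0 := by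
  simp [rho, Real.zero_rpow, (hw _).ne']

lemma rho_pos (w : Fin n → ℕ) {x : Fin n → ℝ} (hx : x ≠ 0) : 0 < rho w x := by
  obtain ⟨i, hi⟩ := Function.ne_iff.1 hx
  refine Real.sqrt_pos.2 (sum_pos' (fun j _ => by positivity) ⟨i, mem_univ i, ?_⟩)
  exact Real.rpow_pos_of_pos (abs_pos.2 hi) _

lemma rho_weightedScale (hw : ∀ i, 0 < w i) {t : ℝ} (ht : 0 < t) (x : Fin n → ℝ) :
    rho w (weightedScale w t x) = t * rho w x := by
  have hterm (j : Fin n) : |t ^ w j * x j| ^ ((2 : ℝ) / w j) = t ^ 2 * |x j| ^ ((2 : ℝ) / w j) := by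
    rw [abs_mul, abs_pow, abs_of_pos ht, Real.mul_rpow (by positivity) (abs_nonneg _),
      ← Real.rpow_natCast, ← Real.rpow_mul ht.le, mul_div_cancel₀ _ (by exact_mod_cast (hw j).ne'),
      Real.rpow_two]
  simp only [rho, weightedScale_apply, hterm, ← mul_sum]
  rw [Real.sqrt_mul (by positivity), Real.sqrt_sq ht.le]

lemma exists_rho_eq_one_weightedScale (hw : ∀ i, 0 < w i) {x : Fin n → ℝ} (hx : x ≠ 0) :
    ∃ y, rho w y = 1 ∧ weightedScale w (rho w x) y = x := by
  have hr := rho_pos w hx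
  refine ⟨weightedScale w (rho w x)⁻¹ x, ?_, ?_⟩
  · rw [rho_weightedScale hw (inv_pos.2 hr), inv_mul_cancel₀ hr.ne']
  · rw [weightedScale_weightedScale, mul_inv_cancel₀ hr.ne', weightedScale_one]

lemma abs_le_one_of_rho_eq_one (hw : ∀ i, 0 < w i) {y : Fin n → ℝ} (hy : rho w y = 1) (i : Fin n) :
    |y i| ≤ 1 := by
  have hsum : ∑ j, |y j| ^ ((2 : ℝ) / w j) = 1 := by
    rw [← Real.sqrt_eq_one]; exact hy
  have hle : |y i| ^ ((2 : ℝ) / w i) ≤ 1 :=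
    hsum ▸ single_le_sum (f := fun j => |y j| ^ ((2 : ℝ) / w j)) (fun j _ => by positivity)
      (mem_univ i)
  exact le_of_not_gt fun h => (Real.one_lt_rpow h (by have := hw i; positivity)).not_ge hle

lemma isCompact_rho_eq_one (hw : ∀ i, 0 < w i) : IsCompact {y : Fin n → ℝ | rho w y = 1} := by
  refine (isCompact_closedBall 0 1).of_isClosed_subset
    (isClosed_eq (continuous_rho w) continuous_const) fun y hy => ?_
  rw [mem_closedBall_zero_iff, pi_norm_le_iff_of_nonneg zero_le_one]
  exact abs_le_one_of_rho_eq_one hw hy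

end Rho

section WGradNorm

variable {n d : ℕ} {w : Fin n → ℕ} {f : MvPolynomial (Fin n) ℝ}

lemma wGradNorm_nonneg (w : Fin n → ℕ) (f : MvPolynomial (Fin n) ℝ) (x : Fin n → ℝ) :
    0 ≤ wGradNorm w f x := Real.sqrt_nonneg _

lemma continuous_wGradNorm (w : Fin n → ℕ) (f : MvPolynomial (Fin n) ℝ) :
    Continuous (wGradNorm w f) := by
  unfold wGradNorm
  refine Real.continuous_sqrt.comp (continuous_finsetSum _ fun i _ => ?_)
  exact ((continuous_rho w).pow _).mul ((pderiv i f).continuous_eval.pow 2)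

lemma wGradNorm_weightedScale (hw : ∀ i, 0 < w i) (hhom : IsWeightedHomog f w d) {t : ℝ}
    (ht : 0 < t) (x : Fin n → ℝ) :
    wGradNorm w f (weightedScale w t x) = t ^ d * wGradNorm w f x := by
  have hterm (i : Fin n) :
      rho w (weightedScale w t x) ^ (2 * w i) * eval (weightedScale w t x) (pderiv i f) ^ 2
        = (t ^ d) ^ 2 * (rho w x ^ (2 * w i) * eval x (pderiv i f) ^ 2) := by
    rw [rho_weightedScale hw ht]
    linear_combination (rho w x ^ (2 * w i) * (t ^ w i * eval (weightedScale w t x) (pderiv i f)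
      + t ^ d * eval x (pderiv i f))) * pow_mul_eval_weightedScale_pderiv hhom i t x
  simp only [wGradNorm, hterm, ← mul_sum]
  rw [Real.sqrt_mul (by positivity), Real.sqrt_sq (by positivity)]

lemma eval_pderiv_eq_zero_of_wGradNorm_eq_zero {x : Fin n → ℝ} (hx : x ≠ 0)
    (h : wGradNorm w f x = 0) (i : Fin n) : eval x (pderiv i f) = 0 := by
  have hterm_nonneg (j : Fin n) : 0 ≤ rho w x ^ (2 * w j) * eval x (pderiv j f) ^ 2 := by
    have := rho_nonneg w x; positivity
  have hsum := (Real.sqrt_eq_zero (sum_nonneg fun j _ => hterm_nonneg j)).1 h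
  have hi := (sum_eq_zero_iff_of_nonneg fun j _ => hterm_nonneg j).1 hsum i (mem_univ i)
  simpa [(rho_pos w hx).ne'] using hi

lemma wGradNorm_pos (hw : ∀ i, 0 < w i) (hhom : IsWeightedHomog f w d) (hnd : Nondeg f)
    {y : Fin n → ℝ} (hy : y ≠ 0) : 0 < wGradNorm w f y := by
  refine (wGradNorm_nonneg w f y).lt_of_ne fun h => hy ?_
  obtain ⟨U, hU, hUcrit⟩ := hnd
  obtain ⟨t, htU, ht⟩ := ((tendsto_weightedScale_zero hw y).mono_left nhdsWithin_le_nhds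
    |>.eventually hU |>.and self_mem_nhdsWithin).exists (f := 𝓝[>] (0 : ℝ))
  refine (weightedScale_eq_zero_iff w (ht.ne')).1 (hUcrit _ htU fun i => ?_)
  have := pow_mul_eval_weightedScale_pderiv hhom i t y
  rw [eval_pderiv_eq_zero_of_wGradNorm_eq_zero hy h.symm, mul_zero] at this
  exact (mul_eq_zero.1 this).resolve_left (pow_ne_zero _ (ht.ne'))

end WGradNorm

theorem stmt3 (n d : ℕ) (w : Fin n → ℕ) (hd : 0 < d) (hw : ∀ i, 0 < w i)
    (f : MvPolynomial (Fin n) ℝ)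
    (hhom : IsWeightedHomog f w d)
    (hnd : Nondeg f) :
    ∃ C > (0 : ℝ), ∃ U ∈ nhds (0 : Fin n → ℝ), ∀ x ∈ U,
      C * rho w x ^ d ≤ wGradNorm w f x := by
  obtain ⟨C, hC, hCle⟩ := (isCompact_rho_eq_one hw).exists_forall_le'
    (continuous_wGradNorm w f).continuousOn fun y hy =>
      wGradNorm_pos hw hhom hnd (by rintro rfl; simp [rho_zero hw] at hy)
  refine ⟨C, hC, Set.univ, univ_mem, fun x _ => ?_⟩
  rcases eq_or_ne x 0 with rfl | hx
  · simpa [rho_zero hw, hd.ne'] using wGradNorm_nonneg w f 0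
  obtain ⟨y, hy, hxy⟩ := exists_rho_eq_one_weightedScale hw hx
  calc C * rho w x ^ d ≤ rho w x ^ d * wGradNorm w f y :=
        mul_comm C _ ▸ mul_le_mul_of_nonneg_left (hCle y hy) (pow_nonneg (rho_nonneg w x) d)
    _ = wGradNorm w f x := by rw [← wGradNorm_weightedScale hw hhom (rho_pos w hx), hxy]
end

section
/- Let f : ℝ² → ℝ be a non-degenerate homogeneous polynomial of degree m ≥ 2 (that is, weighted homogeneous of type (d; w, w) with m = d/w). Then the Łojasiewicz exponent of f equals L(f) = m − 1. -/
open MvPolynomial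

/-!
The gradient of a homogeneous polynomial of degree `m` is homogeneous of degree `m - 1`, and
non-degeneracy forces it to be nonzero away from the origin, since a zero on one ray would give
zeros arbitrarily close to `0`. Its minimum `c > 0` on the unit sphere gives
`‖∇f(x)‖ ≥ c ‖x‖^(m-1)` everywhere, while along any ray `‖∇f(t x₀)‖ = t^(m-1) ‖∇f(x₀)‖`, so no
exponent `λ < m - 1` can satisfy the Łojasiewicz inequality.
-/

open Filter Topology Metric

theorem IsWeightedHomog.isHomogeneous {n m w : ℕ} {f : MvPolynomial (Fin n) ℝ}
    (hf : IsWeightedHomog f (fun _ => w) (m * w)) (hw : 0 < w) : f.IsHomogeneous m := by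
  intro d hd
  have hdw := hf d (mem_support_iff.mpr hd)
  rw [← Finset.sum_mul] at hdw
  rw [Pi.one_def, ← Finsupp.degree_eq_weight_one, Finsupp.degree_eq_sum]
  exact Nat.eq_of_mul_eq_mul_right hw hdw

theorem MvPolynomial.IsHomogeneous.eval_smul {R σ : Type*} [CommSemiring R]
    {φ : MvPolynomial σ R} {n : ℕ} (hφ : φ.IsHomogeneous n) (t : R) (x : σ → R) :
    eval (t • x) φ = t ^ n * eval x φ := by
  conv_lhs => rw [φ.as_sum]
  conv_rhs => rw [φ.as_sum]
  simp only [map_sum, eval_monomial, Finset.mul_sum]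
  refine Finset.sum_congr rfl fun d hd => ?_
  have hdeg : ∑ i ∈ d.support, d i = n := by
    rw [← Finsupp.degree_apply, Finsupp.degree_eq_weight_one, ← Pi.one_def]
    exact hφ (mem_support_iff.mp hd)
  simp only [Finsupp.prod, Pi.smul_apply, smul_eq_mul, mul_pow, Finset.prod_mul_distrib,
    Finset.prod_pow_eq_pow_sum, hdeg]
  ring

section Homogeneous

variable {E : Type*} [NormedAddCommGroup E] [NormedSpace ℝ E]

theorem tendsto_smul_nhdsGT_zero (x : E) : Tendsto (fun t : ℝ => t • x) (𝓝[>] 0) (𝓝 0) := by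
  simpa using (tendsto_id.smul_const x).mono_left (nhdsWithin_le_nhds (a := (0 : ℝ)))

theorem exists_pos_mul_norm_pow_le_of_homogeneous [ProperSpace E] [Nontrivial E] {g : E → ℝ}
    {k : ℕ} (hg : Continuous g) (hpos : ∀ x ≠ 0, 0 < g x)
    (hhom : ∀ t : ℝ, 0 ≤ t → ∀ x, g (t • x) = t ^ k * g x) :
    ∃ c > 0, ∀ x, c * ‖x‖ ^ k ≤ g x := by
  obtain ⟨z, hz, hmin⟩ := (isCompact_sphere (0 : E) 1).exists_isMinOn
    (NormedSpace.sphere_nonempty.mpr zero_le_one) hg.continuousOn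
  have hz0 : z ≠ 0 := ne_zero_of_mem_unit_sphere ⟨z, hz⟩
  refine ⟨g z, hpos z hz0, fun x => ?_⟩
  obtain ⟨u, hu, hxu⟩ : ∃ u ∈ sphere (0 : E) 1, ‖x‖ • u = x := by
    rcases eq_or_ne x 0 with rfl | hx
    · exact ⟨z, hz, by simp⟩
    · exact ⟨‖x‖⁻¹ • x, by simp [norm_smul, hx], smul_inv_smul₀ (norm_ne_zero_iff.mpr hx) x⟩
  calc g z * ‖x‖ ^ k ≤ ‖x‖ ^ k * g u := by rw [mul_comm]; gcongr; exact hmin hu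
    _ = g x := by rw [← hhom _ (norm_nonneg x), hxu]

theorem le_of_eventually_mul_norm_rpow_le {g : E → ℝ} {k : ℕ} {C lam : ℝ} {x₀ : E}
    (hC : 0 < C) (hx₀ : x₀ ≠ 0) (hray : ∀ t : ℝ, 0 < t → g (t • x₀) = t ^ k * g x₀)
    (hineq : ∀ᶠ x in 𝓝 0, C * ‖x‖ ^ lam ≤ g x) : (k : ℝ) ≤ lam := by
  by_contra! hlt
  have hbound : ∀ᶠ t in 𝓝[>] (0 : ℝ), C * ‖x₀‖ ^ lam ≤ t ^ ((k : ℝ) - lam) * g x₀ := by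
    filter_upwards [(tendsto_smul_nhdsGT_zero x₀).eventually hineq, self_mem_nhdsWithin]
      with t ht (htpos : 0 < t)
    rw [hray t htpos, norm_smul, Real.norm_of_nonneg htpos.le,
      Real.mul_rpow htpos.le (norm_nonneg _)] at ht
    rw [Real.rpow_sub htpos, Real.rpow_natCast, div_mul_eq_mul_div,
      le_div_iff₀ (Real.rpow_pos_of_pos htpos lam)]
    linarith
  have hlim : Tendsto (fun t : ℝ => t ^ ((k : ℝ) - lam) * g x₀) (𝓝[>] 0) (𝓝 0) := by
    have := (Real.continuousAt_rpow_const 0 _ (Or.inr (sub_pos.2 hlt).le)).tendsto.mul_const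
      (g x₀)
    rw [Real.zero_rpow (sub_pos.2 hlt).ne', zero_mul] at this
    exact this.mono_left nhdsWithin_le_nhds
  have hpos : 0 < C * ‖x₀‖ ^ lam := mul_pos hC (Real.rpow_pos_of_pos (norm_pos_iff.mpr hx₀) _)
  linarith [ge_of_tendsto hlim hbound]

end Homogeneous

theorem eNorm_eq_norm {n : ℕ} (x : Fin n → ℝ) : eNorm x = ‖WithLp.toLp 2 x‖ := by
  simp [eNorm, EuclideanSpace.norm_eq]

theorem eNorm_smul {n : ℕ} (c : ℝ) (x : Fin n → ℝ) : eNorm (c • x) = |c| * eNorm x := by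
  rw [eNorm_eq_norm, eNorm_eq_norm, WithLp.toLp_smul, norm_smul, Real.norm_eq_abs]

theorem eNorm_pos {n : ℕ} {x : Fin n → ℝ} : 0 < eNorm x ↔ x ≠ 0 := by
  rw [eNorm_eq_norm, norm_pos_iff, Ne, WithLp.toLp_eq_zero]

theorem continuous_eNorm {n : ℕ} : Continuous (eNorm (n := n)) := by
  rw [funext eNorm_eq_norm]
  exact continuous_norm.comp (PiLp.continuous_toLp 2 _)

theorem gradNorm_eq_eNorm {n : ℕ} (f : MvPolynomial (Fin n) ℝ) (x : Fin n → ℝ) :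
    gradNorm f x = eNorm fun i => eval x (pderiv i f) :=
  rfl

theorem continuous_gradNorm {n : ℕ} (f : MvPolynomial (Fin n) ℝ) : Continuous (gradNorm f) :=
  continuous_eNorm.comp (continuous_pi fun _ => continuous_eval _)

namespace MvPolynomial.IsHomogeneous

variable {n m : ℕ} {f : MvPolynomial (Fin n) ℝ}

theorem gradNorm_smul (hf : f.IsHomogeneous m) {t : ℝ} (ht : 0 ≤ t) (x : Fin n → ℝ) :
    gradNorm f (t • x) = t ^ (m - 1) * gradNorm f x := by
  have hgrad :
      (fun i => eval (t • x) (pderiv i f)) = t ^ (m - 1) • fun i => eval x (pderiv i f) := by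
    ext i
    exact hf.pderiv.eval_smul t x
  rw [gradNorm_eq_eNorm, hgrad, eNorm_smul, abs_of_nonneg (pow_nonneg ht _), gradNorm_eq_eNorm]

theorem gradNorm_pos (hf : f.IsHomogeneous m) (hnd : Nondeg f) {x : Fin n → ℝ} (hx : x ≠ 0) :
    0 < gradNorm f x := by
  obtain ⟨U, hU, hcrit⟩ := hnd
  rw [gradNorm_eq_eNorm, eNorm_pos]
  intro hzero
  obtain ⟨t, htU, ht⟩ :=
    (((tendsto_smul_nhdsGT_zero x).eventually hU).and self_mem_nhdsWithin).exists
  refine smul_ne_zero (ne_of_gt ht) hx (hcrit _ htU fun i => ?_)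
  rw [hf.pderiv.eval_smul, congrFun hzero i, Pi.zero_apply, mul_zero]

theorem lojIneq [NeZero n] (hf : f.IsHomogeneous m) (hnd : Nondeg f) :
    LojIneq f (m - 1 : ℕ) := by
  obtain ⟨c, hc, hbound⟩ := exists_pos_mul_norm_pow_le_of_homogeneous
    (g := fun y : EuclideanSpace ℝ (Fin n) => gradNorm f y.ofLp)
    ((continuous_gradNorm f).comp (PiLp.continuous_ofLp 2 _))
    (fun y hy => hf.gradNorm_pos hnd (by simpa using hy))
    (fun t ht y => hf.gradNorm_smul ht y.ofLp)
  refine ⟨c, hc, Set.univ, univ_mem, fun x _ => ?_⟩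
  simpa [eNorm_eq_norm] using hbound (WithLp.toLp 2 x)

theorem le_of_lojIneq [NeZero n] (hf : f.IsHomogeneous m) {lam : ℝ} (h : LojIneq f lam) :
    ((m - 1 : ℕ) : ℝ) ≤ lam := by
  obtain ⟨C, hC, U, hU, hineq⟩ := h
  obtain ⟨x₀, hx₀⟩ := exists_ne (0 : EuclideanSpace ℝ (Fin n))
  have hU' : ∀ᶠ y : EuclideanSpace ℝ (Fin n) in 𝓝 0, y.ofLp ∈ U :=
    (PiLp.continuous_ofLp 2 _).tendsto' 0 0 rfl hU
  refine le_of_eventually_mul_norm_rpow_le (g := fun y => gradNorm f y.ofLp) hC hx₀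
    (fun t ht => by rw [WithLp.ofLp_smul]; exact hf.gradNorm_smul ht.le _) ?_
  filter_upwards [hU'] with y hy
  simpa [eNorm_eq_norm] using hineq _ hy

end MvPolynomial.IsHomogeneous

theorem stmt5 (m w : ℕ) (hm : 2 ≤ m) (hw : 0 < w)
    (f : MvPolynomial (Fin 2) ℝ)
    (hhom : IsWeightedHomog f ![w, w] (m * w))
    (hnd : Nondeg f) :
    lojExp f = (m : ℝ) - 1 := by
  have hweights : ![w, w] = fun _ => w := by
    ext i
    fin_cases i <;> rfl
  have hf : f.IsHomogeneous m := (hweights ▸ hhom).isHomogeneous hw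
  rw [lojExp, ← Nat.cast_pred (by omega)]
  exact IsLeast.csInf_eq ⟨⟨by exact_mod_cast Nat.sub_pos_of_lt hm, hf.lojIneq hnd⟩,
    fun lam h => hf.le_of_lojIneq h.2⟩
end
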